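/- For every integer μ ≥ 0 there is a compact subset C ⊆ SL₂(F) such that {g ∈ SL₂(F) : Cartan(θ(g)⁻¹g) ≤ μ} ⊆ H·C. Consequently the truncation function ω̄(·, μ), which is left H-invariant and locally constant, is compactly supported as a function on the quotient H\G. -/

import Mathlib

open MeasureTheory Matrix Filter
open scoped Classical Topology Pointwise

noncomputable section

abbrev Mat (F : Type) [Field F] : Type := Matrix (Fin 2) (Fin 2) F

abbrev SL2 (F : Type) [Field F] : Type := Matrix.SpecialLinearGroup (Fin 2) F

instance (F : Type) [Field F] [MeasurableSpace F] : MeasurableSpace (Mat F) :=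
  inferInstanceAs (MeasurableSpace (Fin 2 → Fin 2 → F))

instance (F : Type) [Field F] [MeasurableSpace F] : MeasurableSpace (SL2 F) :=
  inferInstanceAs (MeasurableSpace { A : Mat F // A.det = 1 })

instance (F : Type) [Field F] [TopologicalSpace F] : TopologicalSpace (Mat F) :=
  inferInstanceAs (TopologicalSpace (Fin 2 → Fin 2 → F))

instance (F : Type) [Field F] [TopologicalSpace F] : TopologicalSpace (SL2 F) :=
  inferInstanceAs (TopologicalSpace { A : Mat F // A.det = 1 })

variable {F : Type} [Field F]

/-- The ring of integers of `F`, described via the valuation `ν`. -/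
def Oset (ν : F → ℤ) : Set F := {x : F | x = 0 ∨ 0 ≤ ν x}

/-- The maximal compact subgroup `K = SL₂(𝒪)` of `SL₂(F)`. -/
def Kset (ν : F → ℤ) : Set (SL2 F) :=
  {g : SL2 F | ∀ i j : Fin 2, (g : Mat F) i j ∈ Oset ν}

/-- `CartanLE ν g μ` says that `Cartan(g) = -min_{i,j} ν(g i j) ≤ μ`. -/
def CartanLE (ν : F → ℤ) (g : Mat F) (μ : ℤ) : Prop :=
  ∀ i j : Fin 2, g i j = 0 ∨ -μ ≤ ν (g i j)

/-- The valuation extended by `ν(0) = ⊤`. -/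
def nuExt (ν : F → ℤ) (x : F) : WithTop ℤ := if x = 0 then ⊤ else (ν x : WithTop ℤ)

/-- The normalized absolute value `|x| = q^(-ν x)`. -/
def absF (q : ℕ) (ν : F → ℤ) (x : F) : ℝ := if x = 0 then 0 else (q : ℝ) ^ (-(ν x))

/-- The involution `θ = Inn(diag(1,-1))` on `SL₂(F)`. -/
def thetaSL (g : SL2 F) : SL2 F :=
  ⟨!![(g : Mat F) 0 0, -((g : Mat F) 0 1); -((g : Mat F) 1 0), (g : Mat F) 1 1], by
    have h : ((g : Mat F)).det = 1 := g.2
    rw [Matrix.det_fin_two] at h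
    rw [Matrix.det_fin_two_of]
    linear_combination h⟩

/-- The map `τ(g) = θ(g)⁻¹ g`. -/
def tauSL (g : SL2 F) : SL2 F := (thetaSL g)⁻¹ * g

/-- Arthur's truncation function `ω̄(g,μ)`. -/
def omegaBar (ν : F → ℤ) (g : SL2 F) (μ : ℤ) : ℝ :=
  if CartanLE ν ((tauSL g : Mat F)) μ then 1 else 0

/-- `diag(a, a⁻¹)`, the parametrization of the torus `H`. -/
def Hmat (a : F) : SL2 F :=
  if h : a ≠ 0 then
    ⟨!![a, 0; 0, a⁻¹], by rw [Matrix.det_fin_two_of]; field_simp; ring⟩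
  else 1

/-- The parametrization of the split torus `A = {[[x,y],[y,x]] : x² - y² = 1}` by
`t = x + y ∈ F^×`. -/
def Amat [CharZero F] (t : F) : SL2 F :=
  if h : t ≠ 0 then
    ⟨!![(t + t⁻¹) / 2, (t - t⁻¹) / 2; (t - t⁻¹) / 2, (t + t⁻¹) / 2], by
      rw [Matrix.det_fin_two_of]; field_simp; ring⟩
  else 1

/-- The unipotent radical `N` of the Borel `B` stabilizing `F·(1,1)ᵀ`. -/
def NBel (s : F) : SL2 F :=
  ⟨!![1 + s, -s; s, 1 - s], by rw [Matrix.det_fin_two_of]; ring⟩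

/-- The unipotent radical `N̄` of the opposite Borel `B̄` stabilizing `F·(1,-1)ᵀ`. -/
def NBbarel (s : F) : SL2 F :=
  ⟨!![1 + s, s; -s, 1 - s], by rw [Matrix.det_fin_two_of]; ring⟩

/-- Upper triangular unipotent `[[1,s],[0,1]]`. -/
def UpT (s : F) : SL2 F :=
  ⟨!![1, s; 0, 1], by rw [Matrix.det_fin_two_of]; ring⟩

/-- The element `r_γ` attached to a square root `δ` of `γ`. -/
def rmat [CharZero F] (δ : F) : SL2 F :=
  if h : δ ≠ 0 then
    ⟨!![(1 + δ) / 2, (δ - 1) / 2; (δ - 1) / (2 * δ), (1 + δ) / (2 * δ)], by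
      rw [Matrix.det_fin_two_of]; field_simp; ring⟩
  else 1

/-- `diag(ϖ^(-m), ϖ^m)`. -/
def Dmat (ϖ : F) (m : ℤ) : SL2 F :=
  if h : ϖ ≠ 0 then
    ⟨!![ϖ ^ (-m), 0; 0, ϖ ^ m], by
      have h' : ϖ ^ m ≠ 0 := zpow_ne_zero _ h
      rw [Matrix.det_fin_two_of, _root_.zpow_neg]
      field_simp; ring⟩
  else 1

/-- Conjugation action: `g⁻¹ X g` for `g ∈ SL₂(F)` and a matrix `X`. -/
def SL2conj (g : SL2 F) (X : Mat F) : Mat F :=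
  ((g⁻¹ : SL2 F) : Mat F) * X * ((g : SL2 F) : Mat F)

/-- Coordinates on the Lie algebra `𝔰𝔩₂`: `(a,b,c) ↦ [[a,b],[c,-a]]`. -/
def M3 (v : F × F × F) : Mat F := !![v.1, v.2.1; v.2.2, -v.1]

/-- The antidiagonal matrix `[[0,b],[c,0]] ∈ 𝔥^⊥`. -/
def antidiag (b c : F) : Mat F := !![0, b; c, 0]

/-- The diagonal matrix `diag(h,-h) ∈ 𝔥`. -/
def diagMat (h : F) : Mat F := !![h, 0; 0, -h]

/-- The Fourier transform on `𝔰𝔩₂(F)` with respect to the character `ψ ∘ tr(XY)` and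
the (self-dual) Haar measure `volg` in the coordinates `M3`. -/
def FT [MeasurableSpace F] (ψ : F → ℂ) (volg : Measure (F × F × F))
    (f : Mat F → ℂ) (Y : Mat F) : ℂ :=
  ∫ v : F × F × F, f (M3 v) * ψ ((M3 v * Y).trace) ∂volg

/-- `f̃(X) = ∫_K f̂(k⁻¹ X k) dk`. -/
def Ktilde [MeasurableSpace F] (ψ : F → ℂ) (volg : Measure (F × F × F))
    (volK : Measure (SL2 F)) (f : Mat F → ℂ) (X : Mat F) : ℂ :=
  ∫ k : SL2 F, FT ψ volg f (SL2conj k X) ∂volK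

/-- The diagonal torus `H`, the fixed points of `θ`. -/
def Hset : Set (SL2 F) :=
  {g : SL2 F | (g : Mat F) 0 1 = 0 ∧ (g : Mat F) 1 0 = 0}

/-- The split torus `A`. -/
def Aset : Set (SL2 F) :=
  {g : SL2 F | ∃ x y : F, (g : Mat F) = !![x, y; y, x]}

/-- The centralizer `T_γ` of `𝔱_γ` in `SL₂(F)`. -/
def Tset (γ : F) : Set (SL2 F) :=
  {g : SL2 F | ∀ b : F, (g : Mat F) * antidiag (b * γ) b = antidiag (b * γ) b * (g : Mat F)}

/-- `d(g) = max(|H_B(g)|, |H_B̄(g)|)`. -/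
def dOf (HB HBbar : SL2 F → ℤ) (g : SL2 F) : ℤ := max |HB g| |HBbar g|

/-!
Write `g = [[a, b], [c, d]]`. Then `θ(g)⁻¹ g = [[ad + bc, 2bd], [2ac, ad + bc]]`, and since
`ad - bc = 1` also `2ad = 1 + (ad + bc)` and `2bc = (ad + bc) - 1`. Hence `Cartan(θ(g)⁻¹ g) ≤ μ`
forces `ν(xy) ≥ -(μ + ν 2)` for every entry `x` of the first row and `y` of the second. Multiplying
`g` on the left by `diag(t⁻¹, t) ∈ H`, where `t` is the first-row entry of least valuation, makes the
first row integral and keeps the second one in `{ν ≥ -(μ + ν 2)}`; the matrices of `SL₂(F)` with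
entries in that ball form a compact set because `F` is locally compact. The truncation function
factors through `g ↦ θ(g)⁻¹ g`, which is left `H`-invariant, and it is locally constant because
the balls of `ν` are open additive subgroups.
-/

structure IsIntValuation (ν : F → ℤ) : Prop where
  map_mul : ∀ x y : F, x ≠ 0 → y ≠ 0 → ν (x * y) = ν x + ν y
  min_le_map_add : ∀ x y : F, x ≠ 0 → y ≠ 0 → x + y ≠ 0 → min (ν x) (ν y) ≤ ν (x + y)

namespace IsIntValuation

variable {ν : F → ℤ} (hν : IsIntValuation ν)
include hν

theorem map_one : ν 1 = 0 := by
  have h := hν.map_mul 1 1 one_ne_zero one_ne_zero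
  rw [one_mul] at h
  omega

theorem map_neg {x : F} (hx : x ≠ 0) : ν (-x) = ν x := by
  have h1 := hν.map_mul (-1) (-1) (neg_ne_zero.2 one_ne_zero) (neg_ne_zero.2 one_ne_zero)
  have h2 := hν.map_mul (-1) x (neg_ne_zero.2 one_ne_zero) hx
  rw [neg_mul_neg, one_mul, hν.map_one] at h1
  rw [neg_one_mul] at h2
  omega

theorem map_inv {x : F} (hx : x ≠ 0) : ν x⁻¹ = -ν x := by
  have h := hν.map_mul x x⁻¹ hx (inv_ne_zero hx)
  rw [mul_inv_cancel₀ hx, hν.map_one] at h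
  omega

theorem map_pow {x : F} (hx : x ≠ 0) (n : ℕ) : ν (x ^ n) = n * ν x := by
  induction n with
  | zero => simpa using hν.map_one
  | succ n ih =>
    rw [pow_succ, hν.map_mul _ _ (pow_ne_zero n hx) hx, ih]
    push_cast
    ring

theorem map_two_nonneg (h2 : (2 : F) ≠ 0) : 0 ≤ ν 2 := by
  have h := hν.min_le_map_add 1 1 one_ne_zero one_ne_zero (by rwa [one_add_one_eq_two])
  rwa [hν.map_one, min_self, one_add_one_eq_two] at h

def ball (n : ℤ) : AddSubgroup F where
  carrier := {x | x = 0 ∨ n ≤ ν x}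
  zero_mem' := Or.inl rfl
  add_mem' := by
    intro x y hx hy
    rcases eq_or_ne x 0 with rfl | hx0
    · simpa using hy
    rcases eq_or_ne y 0 with rfl | hy0
    · simpa using hx
    rcases eq_or_ne (x + y) 0 with hxy | hxy
    · exact Or.inl hxy
    exact Or.inr <| (le_min (hx.resolve_left hx0) (hy.resolve_left hy0)).trans
      (hν.min_le_map_add x y hx0 hy0 hxy)
  neg_mem' := by
    intro x hx
    rcases eq_or_ne x 0 with rfl | hx0
    · simp
    exact Or.inr <| (hν.map_neg hx0).symm ▸ hx.resolve_left hx0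

theorem mem_ball {n : ℤ} {x : F} : x ∈ hν.ball n ↔ x = 0 ∨ n ≤ ν x := Iff.rfl

theorem mem_ball_self (x : F) : x ∈ hν.ball (ν x) := Or.inr le_rfl

theorem ball_anti {m n : ℤ} (h : m ≤ n) : hν.ball n ≤ hν.ball m :=
  fun _ hx => hx.imp_right h.trans

theorem mul_mem_ball {m n : ℤ} {x y : F} (hx : x ∈ hν.ball m) (hy : y ∈ hν.ball n) :
    x * y ∈ hν.ball (m + n) := by
  rcases eq_or_ne x 0 with rfl | hx0
  · simp
  rcases eq_or_ne y 0 with rfl | hy0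
  · simp
  exact Or.inr <| (hν.map_mul x y hx0 hy0).symm ▸
    add_le_add (hx.resolve_left hx0) (hy.resolve_left hy0)

end IsIntValuation

theorem coe_thetaSL (g : SL2 F) : (thetaSL g : Mat F) = diagMat 1 * (g : Mat F) * diagMat 1 := by
  ext i j
  fin_cases i <;> fin_cases j <;>
    simp [thetaSL, diagMat, Matrix.mul_apply, Matrix.vecMul, dotProduct, Fin.sum_univ_two]

theorem thetaSL_mul (x y : SL2 F) : thetaSL (x * y) = thetaSL x * thetaSL y := by
  have hD : diagMat (1 : F) * diagMat 1 = 1 := by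
    ext i j
    fin_cases i <;> fin_cases j <;> simp [diagMat, Matrix.mul_apply, Fin.sum_univ_two]
  apply Subtype.ext
  change (thetaSL (x * y) : Mat F) = (thetaSL x : Mat F) * (thetaSL y : Mat F)
  have hxy : ((x * y : SL2 F) : Mat F) = (x : Mat F) * (y : Mat F) := rfl
  rw [coe_thetaSL, coe_thetaSL, coe_thetaSL, hxy]
  simp only [Matrix.mul_assoc]
  rw [← Matrix.mul_assoc (diagMat 1) (diagMat 1), hD, Matrix.one_mul]

theorem thetaSL_eq_self_of_mem_Hset {h : SL2 F} (hh : h ∈ (Hset : Set (SL2 F))) :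
    thetaSL h = h := by
  obtain ⟨h01, h10⟩ := hh
  ext i j
  fin_cases i <;> fin_cases j <;> simp [thetaSL, h01, h10]

theorem tauSL_mul_of_mem_Hset {h : SL2 F} (hh : h ∈ (Hset : Set (SL2 F))) (g : SL2 F) :
    tauSL (h * g) = tauSL g := by
  simp only [tauSL, thetaSL_mul, thetaSL_eq_self_of_mem_Hset hh, _root_.mul_inv_rev, mul_assoc,
    inv_mul_cancel_left]

theorem coe_tauSL (g : SL2 F) : (tauSL g : Mat F) =
    !![(g : Mat F) 0 0 * (g : Mat F) 1 1 + (g : Mat F) 0 1 * (g : Mat F) 1 0,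
       2 * ((g : Mat F) 0 1 * (g : Mat F) 1 1);
       2 * ((g : Mat F) 0 0 * (g : Mat F) 1 0),
       (g : Mat F) 0 0 * (g : Mat F) 1 1 + (g : Mat F) 0 1 * (g : Mat F) 1 0] := by
  change ((thetaSL g)⁻¹ * g : SL2 F).val = _
  rw [Matrix.SpecialLinearGroup.coe_mul, Matrix.SpecialLinearGroup.coe_inv, Matrix.adjugate_fin_two]
  ext i j
  fin_cases i <;> fin_cases j <;>
    simp only [thetaSL, Fin.zero_eta, Fin.mk_one, of_apply, cons_val', cons_val_zero, cons_val_one,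
      cons_val_fin_one, neg_neg, Matrix.mul_apply, Fin.sum_univ_two] <;>
    ring

theorem Hmat_mem_Hset (t : F) : Hmat t ∈ (Hset : Set (SL2 F)) := by
  by_cases ht : t = 0
  · simp [Hmat, Hset, ht]
  · exact ⟨by simp [Hmat, ht], by simp [Hmat, ht]⟩

theorem Hmat_inv_mul_apply {t : F} (ht : t ≠ 0) (g : SL2 F) (j : Fin 2) :
    (((Hmat t)⁻¹ * g : SL2 F) : Mat F) 0 j = t⁻¹ * (g : Mat F) 0 j ∧
    (((Hmat t)⁻¹ * g : SL2 F) : Mat F) 1 j = t * (g : Mat F) 1 j := by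
  rw [Matrix.SpecialLinearGroup.coe_mul, Matrix.SpecialLinearGroup.coe_inv, Matrix.adjugate_fin_two]
  simp [Hmat, ht, Matrix.mul_apply, Fin.sum_univ_two]

theorem det_fin_two_eq_one (g : SL2 F) :
    (g : Mat F) 0 0 * (g : Mat F) 1 1 - (g : Mat F) 0 1 * (g : Mat F) 1 0 = 1 := by
  rw [← Matrix.det_fin_two]
  exact g.2

namespace IsIntValuation

variable {ν : F → ℤ} (hν : IsIntValuation ν)
include hν

theorem exists_mem_ball_of_ne_zero {ι : Type*} [Fintype ι] {v : ι → F} (hv : v ≠ 0) :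
    ∃ i, v i ≠ 0 ∧ ∀ j, v j ∈ hν.ball (ν (v i)) := by
  obtain ⟨k, hk⟩ := Function.ne_iff.1 hv
  obtain ⟨i, hi, hmin⟩ := (Finset.univ.filter fun j => v j ≠ 0).exists_min_image (ν ∘ v)
    ⟨k, by simpa using hk⟩
  refine ⟨i, (Finset.mem_filter.1 hi).2, fun j => ?_⟩
  by_cases hj : v j = 0
  · exact Or.inl hj
  · exact Or.inr (hmin j (by simpa using hj))

theorem mul_mem_ball_of_cartanLE_tauSL (h2 : (2 : F) ≠ 0) {μ : ℤ} (hμ : 0 ≤ μ) {g : SL2 F}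
    (hg : CartanLE ν (tauSL g : Mat F) μ) (i j : Fin 2) :
    (g : Mat F) 0 i * (g : Mat F) 1 j ∈ hν.ball (-(μ + ν 2)) := by
  have hτ (k l : Fin 2) : (tauSL g : Mat F) k l ∈ hν.ball (-μ) := hg k l
  have hone : (1 : F) ∈ hν.ball (-μ) := Or.inr (by rw [hν.map_one]; omega)
  have hdet := det_fin_two_eq_one g
  have htwice : 2 * ((g : Mat F) 0 i * (g : Mat F) 1 j) ∈ hν.ball (-μ) := by
    have h00 := hτ 0 0
    have h01 := hτ 0 1
    have h10 := hτ 1 0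
    simp only [coe_tauSL, of_apply, cons_val', cons_val_zero, cons_val_one, empty_val',
      cons_val_fin_one] at h00 h01 h10
    fin_cases i <;> fin_cases j <;> simp only [Fin.zero_eta, Fin.mk_one]
    · exact h10
    · convert add_mem hone h00 using 1
      linear_combination hdet
    · convert sub_mem h00 hone using 1
      linear_combination -hdet
    · exact h01
  have hinv : (2 : F)⁻¹ ∈ hν.ball (-ν 2) := hν.map_inv h2 ▸ hν.mem_ball_self _
  have := hν.mul_mem_ball hinv htwice
  rwa [inv_mul_cancel_left₀ h2, ← neg_add, add_comm] at this

theorem mem_Hset_mul_of_mul_mem_ball {m : ℤ} (hm : 0 ≤ m) {g : SL2 F}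
    (hg : ∀ i j, (g : Mat F) 0 i * (g : Mat F) 1 j ∈ hν.ball (-m)) :
    g ∈ (Hset : Set (SL2 F)) * {g : SL2 F | ∀ i j, (g : Mat F) i j ∈ hν.ball (-m)} := by
  have hrow : (g : Mat F) 0 ≠ 0 := fun h0 => by
    simpa [congrFun h0] using det_fin_two_eq_one g
  obtain ⟨i, hi, hmin⟩ := hν.exists_mem_ball_of_ne_zero hrow
  refine ⟨Hmat _, Hmat_mem_Hset _, (Hmat ((g : Mat F) 0 i))⁻¹ * g, fun k j => ?_,
    mul_inv_cancel_left _ _⟩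
  obtain ⟨h0j, h1j⟩ := Hmat_inv_mul_apply hi g j
  fin_cases k
  · have := hν.mul_mem_ball (hν.map_inv hi ▸ hν.mem_ball_self _) (hmin j)
    rw [neg_add_cancel] at this
    exact h0j ▸ hν.ball_anti (by omega) this
  · exact h1j ▸ hg i j

end IsIntValuation

theorem isCompact_setOf_forall_apply_mem [TopologicalSpace F] [IsTopologicalRing F] [T1Space F]
    {S : Set F} (hS : IsCompact S) : IsCompact {g : SL2 F | ∀ i j, (g : Mat F) i j ∈ S} := by
  have hset : {g : SL2 F | ∀ i j, (g : Mat F) i j ∈ S} =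
      Subtype.val ⁻¹' Set.univ.pi fun _ => Set.univ.pi fun _ => S := by
    ext
    exact ⟨fun h i _ j _ => h i j, fun h i j => h i trivial j trivial⟩
  rw [hset]
  exact SpecialLinearGroup.isClosedEmbedding_val.isCompact_preimage
    (isCompact_univ_pi fun _ : Fin 2 => isCompact_univ_pi fun _ : Fin 2 => hS)

theorem continuous_tauSL_apply [TopologicalSpace F] [IsTopologicalRing F] (i j : Fin 2) :
    Continuous fun g : SL2 F => (tauSL g : Mat F) i j := by
  simp only [coe_tauSL]
  fin_cases i <;> fin_cases j <;>
    simp only [Fin.zero_eta, Fin.mk_one, of_apply, cons_val', cons_val_zero, cons_val_one,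
      cons_val_fin_one] <;>
    fun_prop

namespace IsIntValuation

variable [TopologicalSpace F] [IsTopologicalRing F] {ν : F → ℤ} (hν : IsIntValuation ν)
  (hB : (𝓝 (0 : F)).HasBasis (fun _ : ℤ => True) fun n => (hν.ball n : Set F))
include hB

theorem isClopen_ball (n : ℤ) : IsClopen (hν.ball n : Set F) :=
  have hopen := (hν.ball n).isOpen_of_mem_nhds (hB.mem_of_mem trivial)
  ⟨(hν.ball n).isClosed_of_isOpen hopen, hopen⟩

theorem t2Space : T2Space F := by
  have hzero : ({0} : Set F) = ⋂ n : ℤ, (hν.ball n : Set F) := by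
    ext x
    simp only [Set.mem_singleton_iff, Set.mem_iInter, SetLike.mem_coe]
    refine ⟨fun hx n => hx ▸ zero_mem _, fun hx => ?_⟩
    exact (hx (ν x + 1)).resolve_right (by omega)
  rw [IsTopologicalAddGroup.t2Space_iff_zero_closed, hzero]
  exact isClosed_iInter fun n => (hν.isClopen_ball hB n).isClosed

theorem isCompact_ball [LocallyCompactSpace F] {c : F} (hc0 : c ≠ 0) (hc : 0 < ν c) (k : ℤ) :
    IsCompact (hν.ball k : Set F) := by
  obtain ⟨K, hK, hK0⟩ := exists_compact_mem_nhds (0 : F)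
  obtain ⟨n, -, hnK⟩ := hB.mem_iff.1 hK0
  obtain ⟨j, hj⟩ : ∃ j : ℕ, n - k ≤ j * ν c :=
    ⟨(n - k).toNat, by nlinarith [Int.self_le_toNat (n - k), Int.natCast_nonneg (n - k).toNat]⟩
  have hpre : IsCompact ((c ^ j * ·) ⁻¹' (hν.ball n : Set F)) :=
    (Homeomorph.mulLeft₀ (c ^ j) (pow_ne_zero j hc0)).isCompact_preimage.2
      (hK.of_isClosed_subset (hν.isClopen_ball hB n).isClosed hnK)
  refine hpre.of_isClosed_subset (hν.isClopen_ball hB k).isClosed fun y hy => ?_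
  exact hν.ball_anti (by rw [hν.map_pow hc0]; omega) (hν.mul_mem_ball (hν.mem_ball_self _) hy)

theorem continuous_algebraMap_padic {p : ℕ} [Fact p.Prime] [Algebra ℚ_[p] F]
    (hνp : 0 < ν (p : F))
    (hνext : ∀ x : ℚ_[p], x ≠ 0 → ν (algebraMap ℚ_[p] F x) = ν (p : F) * x.valuation) :
    Continuous (algebraMap ℚ_[p] F) := by
  refine continuous_of_continuousAt_zero (algebraMap ℚ_[p] F) ?_
  rw [ContinuousAt, map_zero, hB.tendsto_right_iff]
  rintro n -
  have hp1 : (1 : ℝ) < p := mod_cast (Fact.out : p.Prime).one_lt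
  filter_upwards [Metric.ball_mem_nhds (0 : ℚ_[p])
    (by positivity : (0 : ℝ) < (p : ℝ) ^ (-max n 0))] with x hx
  rcases eq_or_ne x 0 with rfl | hx0
  · simp
  have hval : max n 0 < x.valuation := by
    rw [mem_ball_zero_iff, Padic.norm_eq_zpow_neg_valuation hx0,
      zpow_lt_zpow_iff_right₀ hp1] at hx
    omega
  right
  rw [hνext x hx0]
  nlinarith [le_max_left n 0, le_max_right n 0]

theorem isClopen_setOf_cartanLE_tauSL (μ : ℤ) :
    IsClopen {g : SL2 F | CartanLE ν (tauSL g : Mat F) μ} := by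
  simp only [CartanLE, Set.ofPred_forall]
  exact isClopen_iInter_of_finite fun i => isClopen_iInter_of_finite fun j =>
    (hν.isClopen_ball hB (-μ)).preimage (continuous_tauSL_apply i j)

theorem isLocallyConstant_omegaBar (μ : ℤ) : IsLocallyConstant fun g => omegaBar ν g μ := by
  have h := (continuous_boolIndicator_iff_isClopen _).2 (hν.isClopen_setOf_cartanLE_tauSL hB μ)
  convert ((IsLocallyConstant.iff_continuous _).2 h).comp fun b : Bool => if b then (1 : ℝ) else 0
    using 1
  funext g
  by_cases hg : CartanLE ν (tauSL g : Mat F) μ <;> simp [omegaBar, Set.boolIndicator, hg]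

end IsIntValuation

theorem truncation_compactly_supported_mod_H_general
    (p : ℕ) [Fact p.Prime]
    (F : Type) [Field F] [CharZero F] [TopologicalSpace F] [IsTopologicalRing F]
    [Algebra ℚ_[p] F] [FiniteDimensional ℚ_[p] F]
    (ν : F → ℤ)
    (hνmul : ∀ x y : F, x ≠ 0 → y ≠ 0 → ν (x * y) = ν x + ν y)
    (hνadd : ∀ x y : F, x ≠ 0 → y ≠ 0 → x + y ≠ 0 → min (ν x) (ν y) ≤ ν (x + y))
    (hνp : 0 < ν ((p : F)))
    (hνext : ∀ x : ℚ_[p], x ≠ 0 → ν (algebraMap ℚ_[p] F x) = ν ((p : F)) * x.valuation)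
    (hνnhds : ∀ s : Set F, s ∈ nhds (0 : F) ↔ ∃ n : ℤ, {x : F | x = 0 ∨ n ≤ ν x} ⊆ s) :
    ∀ μ : ℤ, 0 ≤ μ →
      (∃ C : Set (SL2 F), IsCompact C ∧
        {g : SL2 F | CartanLE ν ((tauSL g : SL2 F) : Mat F) μ} ⊆ (Hset : Set (SL2 F)) * C) ∧
      (∀ h ∈ (Hset : Set (SL2 F)), ∀ g : SL2 F, omegaBar ν (h * g) μ = omegaBar ν g μ) ∧
      IsLocallyConstant (fun g : SL2 F => omegaBar ν g μ) := by
  intro μ hμ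
  have hν : IsIntValuation ν := ⟨hνmul, hνadd⟩
  have hB : (𝓝 (0 : F)).HasBasis (fun _ : ℤ => True) fun n => (hν.ball n : Set F) :=
    ⟨fun s => (hνnhds s).trans (exists_congr fun _ => ⟨fun h => ⟨trivial, h⟩, And.right⟩)⟩
  have h2 : (2 : F) ≠ 0 := two_ne_zero
  have hp0 : (p : F) ≠ 0 := Nat.cast_ne_zero.2 (Fact.out : p.Prime).ne_zero
  have := hν.t2Space hB
  have := continuousSMul_of_algebraMap ℚ_[p] F (hν.continuous_algebraMap_padic hB hνp hνext)
  have := LocallyCompactSpace.of_finiteDimensional_of_complete ℚ_[p] F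
  refine ⟨⟨_, isCompact_setOf_forall_apply_mem (hν.isCompact_ball hB hp0 hνp (-(μ + ν 2))),
    fun g hg => ?_⟩, fun h hh g => by simp only [omegaBar, tauSL_mul_of_mem_Hset hh],
    hν.isLocallyConstant_omegaBar hB μ⟩
  exact hν.mem_Hset_mul_of_mul_mem_ball (by linarith [hν.map_two_nonneg h2])
    (hν.mul_mem_ball_of_cartanLE_tauSL h2 hμ hg)

theorem truncation_compactly_supported_mod_H
    (p : ℕ) [Fact p.Prime] (hp2 : p ≠ 2)
    (F : Type) [Field F] [CharZero F] [TopologicalSpace F] [IsTopologicalRing F]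
    [MeasurableSpace F] [BorelSpace F]
    [Algebra ℚ_[p] F] [FiniteDimensional ℚ_[p] F]
    (ν : F → ℤ) (ϖ : F)
    (hϖ0 : ϖ ≠ 0) (hϖ1 : ν ϖ = 1)
    (hνmul : ∀ x y : F, x ≠ 0 → y ≠ 0 → ν (x * y) = ν x + ν y)
    (hνadd : ∀ x y : F, x ≠ 0 → y ≠ 0 → x + y ≠ 0 → min (ν x) (ν y) ≤ ν (x + y))
    (hνp : 0 < ν ((p : F)))
    (hνext : ∀ x : ℚ_[p], x ≠ 0 → ν (algebraMap ℚ_[p] F x) = ν ((p : F)) * x.valuation)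
    (hνnhds : ∀ s : Set F, s ∈ nhds (0 : F) ↔ ∃ n : ℤ, {x : F | x = 0 ∨ n ≤ ν x} ⊆ s) :
    ∀ μ : ℤ, 0 ≤ μ →
      (∃ C : Set (SL2 F), IsCompact C ∧
        {g : SL2 F | CartanLE ν ((tauSL g : SL2 F) : Mat F) μ} ⊆ (Hset : Set (SL2 F)) * C) ∧
      (∀ h ∈ (Hset : Set (SL2 F)), ∀ g : SL2 F, omegaBar ν (h * g) μ = omegaBar ν g μ) ∧
      IsLocallyConstant (fun g : SL2 F => omegaBar ν g μ) :=
  truncation_compactly_supported_mod_H_general p F ν hνmul hνadd hνp hνext hνnhds
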